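/- arXiv:math/0405046 — 7 statements merged into one kernel-verified Lean document; each statement's English description precedes it below -/
import Mathlib

section
/- If C and D are two strictly positive d1×d2 matrices with ∑_i C_{ij} = 1 for all j and ∑_j D_{ij} = 1 for all i, then C and D are compatible conditionals (i.e., there exists a strictly positive joint distribution P with C_{ij} = P_{ij}/∑_k P_{kj} and D_{ij} = P_{ij}/∑_l P_{il}) if and only if for all indices i1, i2 ∈ [d1] and j1, j2 ∈ [d2], C_{i1 j1} C_{i2 j2} D_{i1 j2} D_{i2 j1} = C_{i1 j2} C_{i2 j1} D_{i1 j1} D_{i2 j2}. -/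
set_option autoImplicit false

/-!
Positive conditionals `C` (columns summing to one) and `D` (rows summing to one) are
compatible exactly when `u j * C i j = v i * D i j` for some positive column weights `u`
and row weights `v`: the joint distribution is then `u j * C i j`, normalised. Equal odds ratios
give such weights, namely `u j = D i₀ j / C i₀ j` and `v i = u j₀ * C i j₀ / D i j₀` for a fixed
reference cell `(i₀, j₀)`. Conversely, every odds ratio of the conditionals of `P` reduces to
`P i₁ j₁ * P i₂ j₂ * P i₁ j₂ * P i₂ j₁` divided by the same product of margins on both sides.
-/

open Finset

variable {ι κ : Type*}

theorem mul_eq_mul_of_odds_ratio_eq {C D : ι → κ → ℝ} (hC : ∀ i j, C i j ≠ 0)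
    (hD : ∀ i j, D i j ≠ 0)
    (h : ∀ (i₁ i₂ : ι) (j₁ j₂ : κ),
      C i₁ j₁ * C i₂ j₂ * D i₁ j₂ * D i₂ j₁ = C i₁ j₂ * C i₂ j₁ * D i₁ j₁ * D i₂ j₂)
    (i₀ : ι) (j₀ : κ) (i : ι) (j : κ) :
    D i₀ j / C i₀ j * C i j = D i₀ j₀ / C i₀ j₀ * C i j₀ / D i j₀ * D i j := by
  field_simp [hC i₀ j, hC i₀ j₀, hD i j₀]
  linear_combination h i i₀ j j₀

variable [Fintype ι] [Fintype κ]

theorem odds_ratio_eq_of_conditionals {P C D : ι → κ → ℝ}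
    (hPC : ∀ i j, C i j = P i j / ∑ k, P k j) (hPD : ∀ i j, D i j = P i j / ∑ l, P i l)
    (i₁ i₂ : ι) (j₁ j₂ : κ) :
    C i₁ j₁ * C i₂ j₂ * D i₁ j₂ * D i₂ j₁ = C i₁ j₂ * C i₂ j₁ * D i₁ j₁ * D i₂ j₂ := by
  simp only [hPC, hPD]
  ring

theorem eq_div_sum_of_eq_mul {p q : ι → ℝ} {a : ℝ} (ha : a ≠ 0) (hq : ∑ i, q i = 1)
    (hp : ∀ i, p i = a * q i) (i : ι) : q i = p i / ∑ k, p k := by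
  rw [hp, sum_congr rfl fun k _ => hp k, ← mul_sum, hq, mul_one, mul_div_cancel_left₀ _ ha]

theorem exists_joint_of_mul_eq_mul [Nonempty ι] [Nonempty κ] {C D : ι → κ → ℝ}
    (hC : ∀ i j, 0 < C i j) (hCsum : ∀ j, ∑ i, C i j = 1) (hDsum : ∀ i, ∑ j, D i j = 1)
    {u : κ → ℝ} {v : ι → ℝ} (hu : ∀ j, 0 < u j) (hv : ∀ i, v i ≠ 0)
    (huv : ∀ i j, u j * C i j = v i * D i j) :
    ∃ P : ι → κ → ℝ, (∀ i j, 0 < P i j) ∧ (∑ i, ∑ j, P i j = 1) ∧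
      (∀ i j, C i j = P i j / ∑ k, P k j) ∧ (∀ i j, D i j = P i j / ∑ l, P i l) := by
  set Z := ∑ i, ∑ j, u j * C i j
  have hZ : 0 < Z :=
    sum_pos (fun i _ => sum_pos (fun j _ => mul_pos (hu j) (hC i j)) univ_nonempty)
      univ_nonempty
  refine ⟨fun i j => u j * C i j / Z, fun i j => by have := hu j; have := hC i j; positivity,
    ?_, fun i j => ?_, fun i j => ?_⟩
  · simp only [← sum_div]
    exact div_self hZ.ne'
  · refine eq_div_sum_of_eq_mul (p := fun k => u j * C k j / Z)
      (div_ne_zero (hu j).ne' hZ.ne') (hCsum j) (fun k => ?_) i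
    ring
  · refine eq_div_sum_of_eq_mul (p := fun l => u l * C i l / Z)
      (div_ne_zero (hv i) hZ.ne') (hDsum i) (fun l => ?_) j
    rw [huv]
    ring

/-- For strictly positive conditional matrices, compatibility is equivalent to
equality of all 2×2 odds ratios. -/
theorem positive_compatible_iff_odds_ratios (d1 d2 : ℕ) (hd1 : 0 < d1) (hd2 : 0 < d2)
    (C D : Fin d1 → Fin d2 → ℝ)
    (hC : ∀ i j, 0 < C i j) (hD : ∀ i j, 0 < D i j)
    (hCsum : ∀ j, ∑ i, C i j = 1) (hDsum : ∀ i, ∑ j, D i j = 1) :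
    (∃ P : Fin d1 → Fin d2 → ℝ,
      (∀ i j, 0 < P i j) ∧ (∑ i, ∑ j, P i j = 1) ∧
      (∀ i j, C i j = P i j / ∑ k, P k j) ∧
      (∀ i j, D i j = P i j / ∑ l, P i l)) ↔
    (∀ (i1 i2 : Fin d1) (j1 j2 : Fin d2),
      C i1 j1 * C i2 j2 * D i1 j2 * D i2 j1 = C i1 j2 * C i2 j1 * D i1 j1 * D i2 j2) := by
  refine ⟨fun ⟨P, _, _, hPC, hPD⟩ => odds_ratio_eq_of_conditionals hPC hPD, fun h => ?_⟩
  let i₀ : Fin d1 := ⟨0, hd1⟩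
  let j₀ : Fin d2 := ⟨0, hd2⟩
  have : Nonempty (Fin d1) := ⟨i₀⟩
  have : Nonempty (Fin d2) := ⟨j₀⟩
  exact exists_joint_of_mul_eq_mul hC hCsum hDsum (fun j => div_pos (hD i₀ j) (hC i₀ j))
    (fun i => (div_pos (mul_pos (div_pos (hD i₀ j₀) (hC i₀ j₀)) (hC i j₀)) (hD i j₀)).ne')
    (mul_eq_mul_of_odds_ratio_eq (fun i j => (hC i j).ne') (fun i j => (hD i j).ne') h i₀ j₀)
end

section
/- There exist 3×3 nonnegative matrices C and D (with columns of C summing to 1 and rows of D summing to 1, and C_{ij} = 0 iff D_{ij} = 0) that satisfy all degree-4 odds-ratio binomials C_{i1j1}C_{i2j2}D_{i1j2}D_{i2j1} = C_{i1j2}C_{i2j1}D_{i1j1}D_{i2j2}, yet are not compatible conditionals. Specifically, C with rows (1/2,1/2,0),(0,1/2,1/2),(1/2,0,1/2) and D with rows (1/3,2/3,0),(0,1/3,2/3),(1/3,0,2/3) satisfy all degree-4 binomials but fail the degree-6 binomial C_{11}C_{22}C_{33}D_{12}D_{23}D_{31} = C_{12}C_{23}C_{31}D_{11}D_{22}D_{33},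 hence no joint distribution P has C and D as its conditionals. -/
set_option autoImplicit false

open Matrix

/-- The specific matrix `C` from the example of Arnold, Castillo and Sarabia. -/
noncomputable def Cex : Matrix (Fin 3) (Fin 3) ℝ :=
  !![1/2, 1/2, 0; 0, 1/2, 1/2; 1/2, 0, 1/2]

/-- The specific matrix `D` from the example. -/
noncomputable def Dex : Matrix (Fin 3) (Fin 3) ℝ :=
  !![1/3, 2/3, 0; 0, 1/3, 2/3; 1/3, 0, 2/3]

/-! If `C` and `D` are the conditionals of `P`, every column of `C` and every row of `D` has a
nonzero entry, where `P` is positive; so all marginals of `P` are positive, `C = P / colsum` and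
`D = P / rowsum`. Then `∏ C i (f i) ∏ D i (f (σ i))` and `∏ C i (f (σ i)) ∏ D i (f i)` are the
same product of entries of `P` over the same products of marginals, because `σ` only permutes the
factors. For the 3-cycle `σ` this degree-6 binomial fails for `Cex` and `Dex`. -/

section Compatibility

variable {ι κ : Type*} [Fintype ι]

lemma prod_div_mul_prod_div_perm [DecidableEq ι] (P : Matrix ι κ ℝ) (c : κ → ℝ) (r : ι → ℝ)
    (σ : Equiv.Perm ι) (f : ι → κ) :
    (∏ i, P i (f i) / c (f i)) * ∏ i, P i (f (σ i)) / r i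
      = (∏ i, P i (f (σ i)) / c (f (σ i))) * ∏ i, P i (f i) / r i := by
  have hc : ∏ i, c (f (σ i)) = ∏ i, c (f i) := Equiv.prod_comp σ (fun i => c (f i))
  simp only [Finset.prod_div_distrib, hc]
  ring

variable [Fintype κ]

/-- `C i j = P(i ∣ j)` and `D i j = P(j ∣ i)` for a joint distribution `P`. -/
def Compatible (C D : Matrix ι κ ℝ) : Prop :=
  ∃ P : Matrix ι κ ℝ, (∀ i j, 0 ≤ P i j) ∧ (∑ i, ∑ j, P i j = 1) ∧
    (∀ i j, (0 < ∑ k, P k j) → C i j = P i j / ∑ k, P k j) ∧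
    (∀ i j, (0 < ∑ l, P i l) → D i j = P i j / ∑ l, P i l) ∧
    (∀ i j, P i j = 0 → C i j = 0 ∧ D i j = 0)

namespace Compatible

variable {C D : Matrix ι κ ℝ}

lemma cycle_binomial [DecidableEq ι] (h : Compatible C D) (hC : ∀ j, ∑ i, C i j = 1)
    (hD : ∀ i, ∑ j, D i j = 1) (σ : Equiv.Perm ι) (f : ι → κ) :
    (∏ i, C i (f i)) * ∏ i, D i (f (σ i)) = (∏ i, C i (f (σ i))) * ∏ i, D i (f i) := by
  obtain ⟨P, hP, -, hCP, hDP, hzero⟩ := h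
  have hsupp : ∀ i j, (C i j ≠ 0 ∨ D i j ≠ 0) → P i j ≠ 0 := fun i j hne hP0 =>
    hne.elim (· (hzero i j hP0).1) (· (hzero i j hP0).2)
  have hcol : ∀ j, 0 < ∑ k, P k j := fun j => by
    obtain ⟨i, -, hi⟩ := Finset.exists_ne_zero_of_sum_ne_zero (hC j ▸ one_ne_zero)
    exact Finset.sum_pos' (fun k _ => hP k j)
      ⟨i, Finset.mem_univ _, (hP i j).lt_of_ne' (hsupp i j (.inl hi))⟩
  have hrow : ∀ i, 0 < ∑ l, P i l := fun i => by
    obtain ⟨j, -, hj⟩ := Finset.exists_ne_zero_of_sum_ne_zero (hD i ▸ one_ne_zero)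
    exact Finset.sum_pos' (fun l _ => hP i l)
      ⟨j, Finset.mem_univ _, (hP i j).lt_of_ne' (hsupp i j (.inr hj))⟩
  simp only [fun i j => hCP i j (hcol j), fun i j => hDP i j (hrow i)]
  exact prod_div_mul_prod_div_perm P (fun j => ∑ k, P k j) (fun i => ∑ l, P i l) σ f

end Compatible

end Compatibility

lemma Cex_colSum (j : Fin 3) : ∑ i, Cex i j = 1 := by
  fin_cases j <;> norm_num [Cex, Fin.sum_univ_three, Matrix.cons_val_two]

lemma Dex_rowSum (i : Fin 3) : ∑ j, Dex i j = 1 := by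
  fin_cases i <;> norm_num [Dex, Fin.sum_univ_three, Matrix.cons_val_two]

lemma Cex_Dex_odds_ratio (i1 i2 j1 j2 : Fin 3) :
    Cex i1 j1 * Cex i2 j2 * Dex i1 j2 * Dex i2 j1
      = Cex i1 j2 * Cex i2 j1 * Dex i1 j1 * Dex i2 j2 := by
  fin_cases i1 <;> fin_cases i2 <;> fin_cases j1 <;> fin_cases j2 <;> norm_num [Cex, Dex]

lemma Cex_Dex_cycle_binomial_ne :
    Cex 0 0 * Cex 1 1 * Cex 2 2 * Dex 0 1 * Dex 1 2 * Dex 2 0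
      ≠ Cex 0 1 * Cex 1 2 * Cex 2 0 * Dex 0 0 * Dex 1 1 * Dex 2 2 := by
  norm_num [Cex, Dex, Matrix.cons_val_two]

/-- `Cex` and `Dex` are nonnegative, have the correct sums and common support,
satisfy all degree-4 odds-ratio binomials, yet fail a degree-6 circuit binomial and are not
compatible conditionals: no joint distribution `P` has them as its conditional arrays. -/
theorem incompatible_despite_odds_ratios :
    (∀ i j, 0 ≤ Cex i j) ∧ (∀ i j, 0 ≤ Dex i j) ∧
    (∀ j, ∑ i, Cex i j = 1) ∧ (∀ i, ∑ j, Dex i j = 1) ∧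
    (∀ i j, Cex i j = 0 ↔ Dex i j = 0) ∧
    (∀ (i1 i2 j1 j2 : Fin 3),
      Cex i1 j1 * Cex i2 j2 * Dex i1 j2 * Dex i2 j1
        = Cex i1 j2 * Cex i2 j1 * Dex i1 j1 * Dex i2 j2) ∧
    (Cex 0 0 * Cex 1 1 * Cex 2 2 * Dex 0 1 * Dex 1 2 * Dex 2 0
      ≠ Cex 0 1 * Cex 1 2 * Cex 2 0 * Dex 0 0 * Dex 1 1 * Dex 2 2) ∧
    ¬ (∃ P : Matrix (Fin 3) (Fin 3) ℝ,
        (∀ i j, 0 ≤ P i j) ∧ (∑ i, ∑ j, P i j = 1) ∧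
        (∀ i j, (0 < ∑ k, P k j) → Cex i j = P i j / ∑ k, P k j) ∧
        (∀ i j, (0 < ∑ l, P i l) → Dex i j = P i j / ∑ l, P i l) ∧
        (∀ i j, P i j = 0 → Cex i j = 0 ∧ Dex i j = 0)) := by
  refine ⟨?_, ?_, Cex_colSum, Dex_rowSum, ?_, Cex_Dex_odds_ratio,
    Cex_Dex_cycle_binomial_ne, ?_⟩
  · intro i j; fin_cases i <;> fin_cases j <;> norm_num [Cex]
  · intro i j; fin_cases i <;> fin_cases j <;> norm_num [Dex]
  · intro i j; fin_cases i <;> fin_cases j <;> norm_num [Cex, Dex]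
  · intro hcompat
    have h := (show Compatible Cex Dex from hcompat).cycle_binomial Cex_colSum Dex_rowSum
      (finRotate 3) id
    simp only [Fin.prod_univ_three, id, finRotate_apply, Fin.reduceAdd] at h
    exact Cex_Dex_cycle_binomial_ne (by linear_combination h)
end

section
/- If two nonnegative matrices C and D are compatible conditionals (there exists a joint distribution P with C_{ij} = P_{ij}/∑_k P_{kj} and D_{ij} = P_{ij}/∑_l P_{il} wherever defined, and C, D vanish on the zero cells of P), then for every r ≥ 2 and every sequence of indices i_1,...,i_r ∈ [d1], j_1,...,j_r ∈ [d2] (with i_{r+1} := i_1), the circuit binomial identity ∏_{t=1}^{r} C_{i_t j_t} D_{i_{t+1} j_t} = ∏_{t=1}^{r} D_{i_t j_t} C_{i_{t+1} j_t} holds. -/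
set_option autoImplicit false

lemma aux1 (r a : ℕ) (hr : 0 < r) (ha : a < r) : ((a + 1) % r + r - 1) % r = a := by
  rcases Nat.lt_or_ge (a + 1) r with h | h
  · rw [Nat.mod_eq_of_lt h, show a + 1 + r - 1 = a + r by omega, Nat.add_mod_right,
      Nat.mod_eq_of_lt ha]
  · have : a + 1 = r := by omega
    rw [this, Nat.mod_self, show 0 + r - 1 = r - 1 by omega,
      Nat.mod_eq_of_lt (show r - 1 < r by omega)]
    omega

lemma aux2 (r a : ℕ) (hr : 0 < r) (ha : a < r) : ((a + r - 1) % r + 1) % r = a := by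
  rcases Nat.eq_zero_or_pos a with h | h
  · subst h
    rw [show 0 + r - 1 = r - 1 by omega, Nat.mod_eq_of_lt (show r - 1 < r by omega),
      show r - 1 + 1 = r by omega, Nat.mod_self]
  · rw [show a + r - 1 = a - 1 + r by omega, Nat.add_mod_right,
      Nat.mod_eq_of_lt (show a - 1 < r by omega), show a - 1 + 1 = a by omega,
      Nat.mod_eq_of_lt ha]

lemma prod_range_cyclic_shift (r : ℕ) (hr : 0 < r) (f : ℕ → ℝ) :
    ∏ t ∈ Finset.range r, f ((t + 1) % r) = ∏ t ∈ Finset.range r, f t := by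
  apply Finset.prod_nbij' (fun t => (t + 1) % r) (fun t => (t + r - 1) % r)
  · intro a ha; exact Finset.mem_range.2 (Nat.mod_lt _ hr)
  · intro a ha; exact Finset.mem_range.2 (Nat.mod_lt _ hr)
  · intro a ha; exact aux1 r a hr (Finset.mem_range.1 ha)
  · intro a ha; exact aux2 r a hr (Finset.mem_range.1 ha)
  · intro a ha; rfl

/-- If `C`, `D` are compatible conditionals (via the Lawrence lifting
parametrization `C i j = P i j * v j`, `D i j = P i j * u i` with nonnegative `P, u, v`),
then every circuit binomial identity holds: for every `r ≥ 2` and every cyclic sequence of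
indices, `∏ t, C (i t) (j t) * D (i (t+1)) (j t) = ∏ t, D (i t) (j t) * C (i (t+1)) (j t)`. -/
theorem compatible_satisfy_circuit_binomials (d1 d2 : ℕ)
    (C D : Fin d1 → Fin d2 → ℝ)
    (hC : ∀ i j, 0 ≤ C i j) (hD : ∀ i j, 0 ≤ D i j)
    (hcompat : ∃ (P : Fin d1 → Fin d2 → ℝ) (u : Fin d1 → ℝ) (v : Fin d2 → ℝ),
      (∀ i j, 0 ≤ P i j) ∧ (∀ i, 0 ≤ u i) ∧ (∀ j, 0 ≤ v j) ∧
      (∀ i j, C i j = P i j * v j) ∧ (∀ i j, D i j = P i j * u i)) :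
    ∀ (r : ℕ), 2 ≤ r → ∀ (i : ℕ → Fin d1) (j : ℕ → Fin d2),
      ∏ t ∈ Finset.range r, (C (i t) (j t) * D (i ((t + 1) % r)) (j t))
        = ∏ t ∈ Finset.range r, (D (i t) (j t) * C (i ((t + 1) % r)) (j t)) := by
  obtain ⟨P, u, v, _, _, _, hCP, hDP⟩ := hcompat
  intro r hr i j
  have hr0 : 0 < r := by omega
  have key : ∀ t, C (i t) (j t) * D (i ((t + 1) % r)) (j t)
      = (P (i t) (j t) * P (i ((t + 1) % r)) (j t) * v (j t)) * u (i ((t + 1) % r)) := by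
    intro t; rw [hCP, hDP]; ring
  have key' : ∀ t, D (i t) (j t) * C (i ((t + 1) % r)) (j t)
      = (P (i t) (j t) * P (i ((t + 1) % r)) (j t) * v (j t)) * u (i t) := by
    intro t; rw [hCP, hDP]; ring
  simp only [key, key', Finset.prod_mul_distrib]
  rw [prod_range_cyclic_shift r hr0 (fun t => u (i t))]
end

section
/- For the compatibility problem of two binary conditionals C = p(x_1 | x_2) and D = p(x_2 | x_1) with d_1 = d_2 = 2: two matrices C, D ∈ ℝ^{2×2} with strictly positive entries, columns of C summing to 1 and rows of D summing to 1, are compatible if and only if C_{11}C_{22}D_{12}D_{21} = C_{12}C_{21}D_{11}D_{22}. -/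
set_option autoImplicit false

/-!
A strictly positive `2 × 2` table `P` has column conditionals `C` and row conditionals `D`
exactly when each column of `P` is proportional to the matching column of `C` and each row to
the matching row of `D`; for probability vectors of length two, proportionality is a single
cross-product equation. Multiplying the four equations and cancelling `∏ P i j` gives the
odds-ratio identity. Conversely, Bayes' rule forces the second marginal to be proportional to
`(C₀₁D₀₀, C₀₀D₀₁)`, and the table `C i j` times this marginal satisfies three of the four
cross-product equations outright and the last one exactly by the odds-ratio identity.
-/

open Finset

section Conditionals

variable {K : Type*} [Field K]

def HasConditionals (P C D : Fin 2 → Fin 2 → K) : Prop :=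
  (∀ i j, C i j = P i j / (P 0 j + P 1 j)) ∧ (∀ i j, D i j = P i j / (P i 0 + P i 1))

theorem forall_eq_div_add_iff_mul_eq_mul {d x : Fin 2 → K} (hd : d 0 + d 1 = 1)
    (hx : x 0 + x 1 ≠ 0) :
    (∀ j, d j = x j / (x 0 + x 1)) ↔ x 0 * d 1 = x 1 * d 0 := by
  constructor
  · intro h
    rw [h 0, h 1]
    ring
  · intro h
    refine Fin.forall_fin_two.2 ⟨?_, ?_⟩ <;> rw [eq_div_iff hx]
    · linear_combination x 0 * hd - h
    · linear_combination x 1 * hd + h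

theorem hasConditionals_iff_mul_eq_mul {P C D : Fin 2 → Fin 2 → K}
    (hCsum : ∀ j, C 0 j + C 1 j = 1) (hDsum : ∀ i, D i 0 + D i 1 = 1)
    (hcol : ∀ j, P 0 j + P 1 j ≠ 0) (hrow : ∀ i, P i 0 + P i 1 ≠ 0) :
    HasConditionals P C D ↔
      (∀ j, P 0 j * C 1 j = P 1 j * C 0 j) ∧ ∀ i, P i 0 * D i 1 = P i 1 * D i 0 := by
  rw [HasConditionals, forall_comm]
  exact and_congr
    (forall_congr' fun j ↦ forall_eq_div_add_iff_mul_eq_mul (hCsum j) (hcol j))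
    (forall_congr' fun i ↦ forall_eq_div_add_iff_mul_eq_mul (hDsum i) (hrow i))

theorem hasConditionals_div_const {P C D : Fin 2 → Fin 2 → K} {s : K} (hs : s ≠ 0) :
    HasConditionals (fun i j ↦ P i j / s) C D ↔ HasConditionals P C D := by
  simp only [HasConditionals, ← add_div, div_div_div_cancel_right₀ hs]

/-- By Bayes' rule a joint table with conditionals `C` and `D` has second marginal proportional
to `(C₀₁D₀₀, C₀₀D₀₁)`; this is the table `C i j` times that marginal. -/
def jointOfConditionals (C D : Fin 2 → Fin 2 → K) (i j : Fin 2) : K :=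
  C i j * ![C 0 1 * D 0 0, C 0 0 * D 0 1] j

theorem jointOfConditionals_zero (C D : Fin 2 → Fin 2 → K) (i : Fin 2) :
    jointOfConditionals C D i 0 = C i 0 * (C 0 1 * D 0 0) := rfl

theorem jointOfConditionals_one (C D : Fin 2 → Fin 2 → K) (i : Fin 2) :
    jointOfConditionals C D i 1 = C i 1 * (C 0 0 * D 0 1) := rfl

end Conditionals

section Positive

variable {K : Type*} [Field K] [LinearOrder K] [IsStrictOrderedRing K]

theorem hasConditionals_iff_mul_eq_mul_of_pos {P C D : Fin 2 → Fin 2 → K}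
    (hP : ∀ i j, 0 < P i j) (hCsum : ∀ j, ∑ i, C i j = 1) (hDsum : ∀ i, ∑ j, D i j = 1) :
    HasConditionals P C D ↔
      (∀ j, P 0 j * C 1 j = P 1 j * C 0 j) ∧ ∀ i, P i 0 * D i 1 = P i 1 * D i 0 :=
  hasConditionals_iff_mul_eq_mul (by simpa [Fin.sum_univ_two] using hCsum)
    (by simpa [Fin.sum_univ_two] using hDsum)
    (fun j ↦ (add_pos (hP 0 j) (hP 1 j)).ne') (fun i ↦ (add_pos (hP i 0) (hP i 1)).ne')

theorem odds_ratio_eq_of_hasConditionals {P C D : Fin 2 → Fin 2 → K}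
    (hP : ∀ i j, 0 < P i j) (hCsum : ∀ j, ∑ i, C i j = 1) (hDsum : ∀ i, ∑ j, D i j = 1)
    (h : HasConditionals P C D) :
    C 0 0 * C 1 1 * D 0 1 * D 1 0 = C 0 1 * C 1 0 * D 0 0 * D 1 1 := by
  obtain ⟨hcol, hrow⟩ := (hasConditionals_iff_mul_eq_mul_of_pos hP hCsum hDsum).1 h
  have hprod : P 0 0 * P 0 1 * P 1 0 * P 1 1 ≠ 0 := by
    have := hP 0 0; have := hP 0 1; have := hP 1 0; have := hP 1 1
    positivity
  refine mul_left_cancel₀ hprod ?_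
  calc P 0 0 * P 0 1 * P 1 0 * P 1 1 * (C 0 0 * C 1 1 * D 0 1 * D 1 0)
      = (P 1 0 * C 0 0) * (P 0 1 * C 1 1) * (P 0 0 * D 0 1) * (P 1 1 * D 1 0) := by ring
    _ = (P 0 0 * C 1 0) * (P 1 1 * C 0 1) * (P 0 1 * D 0 0) * (P 1 0 * D 1 1) := by
      rw [← hcol 0, hcol 1, hrow 0, ← hrow 1]
    _ = P 0 0 * P 0 1 * P 1 0 * P 1 1 * (C 0 1 * C 1 0 * D 0 0 * D 1 1) := by ring

theorem jointOfConditionals_pos {C D : Fin 2 → Fin 2 → K} (hC : ∀ i j, 0 < C i j)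
    (hD : ∀ i j, 0 < D i j) (i : Fin 2) : ∀ j, 0 < jointOfConditionals C D i j :=
  Fin.forall_fin_two.2
    ⟨mul_pos (hC i 0) (mul_pos (hC 0 1) (hD 0 0)), mul_pos (hC i 1) (mul_pos (hC 0 0) (hD 0 1))⟩

theorem hasConditionals_jointOfConditionals {C D : Fin 2 → Fin 2 → K} (hC : ∀ i j, 0 < C i j)
    (hD : ∀ i j, 0 < D i j) (hCsum : ∀ j, ∑ i, C i j = 1) (hDsum : ∀ i, ∑ j, D i j = 1)
    (hodds : C 0 0 * C 1 1 * D 0 1 * D 1 0 = C 0 1 * C 1 0 * D 0 0 * D 1 1) :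
    HasConditionals (jointOfConditionals C D) C D := by
  rw [hasConditionals_iff_mul_eq_mul_of_pos (jointOfConditionals_pos hC hD) hCsum hDsum,
    Fin.forall_fin_two, Fin.forall_fin_two]
  simp only [jointOfConditionals_zero, jointOfConditionals_one]
  refine ⟨⟨by ring, by ring⟩, by ring, ?_⟩
  linear_combination -hodds

theorem exists_normalized_of_hasConditionals {Q C D : Fin 2 → Fin 2 → K}
    (hQ : ∀ i j, 0 < Q i j) (h : HasConditionals Q C D) :
    ∃ P : Fin 2 → Fin 2 → K, (∀ i j, 0 < P i j) ∧ (∑ i, ∑ j, P i j = 1) ∧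
      HasConditionals P C D := by
  have hS : 0 < ∑ i, ∑ j, Q i j :=
    sum_pos (fun i _ ↦ sum_pos (fun j _ ↦ hQ i j) univ_nonempty) univ_nonempty
  refine ⟨fun i j ↦ Q i j / ∑ i, ∑ j, Q i j, fun i j ↦ div_pos (hQ i j) hS, ?_,
    (hasConditionals_div_const hS.ne').2 h⟩
  simp only [← sum_div, div_self hS.ne']

end Positive

/-- two strictly positive `2 × 2` conditional matrices `C = p(x₁|x₂)` and
`D = p(x₂|x₁)` (columns of `C` and rows of `D` summing to one) are compatible if and only if
their odds ratios agree: `C₁₁C₂₂D₁₂D₂₁ = C₁₂C₂₁D₁₁D₂₂`. -/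
theorem two_by_two_compatible_iff_odds_ratio
    (C D : Fin 2 → Fin 2 → ℝ)
    (hC : ∀ i j, 0 < C i j) (hD : ∀ i j, 0 < D i j)
    (hCsum : ∀ j, ∑ i, C i j = 1) (hDsum : ∀ i, ∑ j, D i j = 1) :
    (∃ P : Fin 2 → Fin 2 → ℝ,
      (∀ i j, 0 < P i j) ∧ (∑ i, ∑ j, P i j = 1) ∧
      (∀ i j, C i j = P i j / (P 0 j + P 1 j)) ∧
      (∀ i j, D i j = P i j / (P i 0 + P i 1))) ↔
    C 0 0 * C 1 1 * D 0 1 * D 1 0 = C 0 1 * C 1 0 * D 0 0 * D 1 1 := by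
  constructor
  · rintro ⟨P, hP, -, hCP, hDP⟩
    exact odds_ratio_eq_of_hasConditionals hP hCsum hDsum ⟨hCP, hDP⟩
  · intro hodds
    exact exists_normalized_of_hasConditionals (jointOfConditionals_pos hC hD)
      (hasConditionals_jointOfConditionals hC hD hCsum hDsum hodds)
end

section
/- Let C, D, E be 2×2×2 arrays arising as the three full conditionals p(x_1|x_2,x_3), p(x_2|x_1,x_3), p(x_3|x_1,x_2) of a joint distribution, i.e., C_{ijk} = P_{ijk} u_{jk}, D_{ijk} = P_{ijk} v_{ik}, E_{ijk} = P_{ijk} w_{ij} for nonnegative P and parameter arrays u, v, w. Then the following identities hold: (a) C_{111}C_{221}D_{121}D_{211} = C_{121}C_{211}D_{111}D_{221}; (b) C_{111}D_{211}E_{221}D_{222}C_{212}E_{112} = C_{211}D_{221}E_{222}D_{212}C_{112}E_{111}; (c) C_{111}D_{211}E_{221}C_{222}D_{122}E_{112} = C_{211}D_{221}E_{222}C_{122}D_{112}E_{111}; (d) C_{111}D_{211}C_{221}E_{121}C_{122}D_{222}C_{212}E_{112} = C_{211}D_{221}C_{121}E_{122}C_{222}D_{212}C_{112}E_{111}. 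-/
set_option autoImplicit false

/-- for the three full conditionals `p(x₁|x₂,x₃)`, `p(x₂|x₁,x₃)`, `p(x₃|x₁,x₂)`
of a joint `2×2×2` distribution, given by the monomial parametrization
`C_{ijk} = P_{ijk} u_{jk}`, `D_{ijk} = P_{ijk} v_{ik}`, `E_{ijk} = P_{ijk} w_{ij}`, the four
circuit binomials corresponding to the four combinatorial types of circuits on the 3-cube hold.
(Index `1` is `0 : Fin 2` and index `2` is `1 : Fin 2`.) -/
theorem trivariate_full_conditional_binomials
    (P : Fin 2 → Fin 2 → Fin 2 → ℝ) (u v w : Fin 2 → Fin 2 → ℝ)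
    (hP : ∀ i j k, 0 ≤ P i j k) (hu : ∀ j k, 0 ≤ u j k) (hv : ∀ i k, 0 ≤ v i k)
    (hw : ∀ i j, 0 ≤ w i j)
    (C D E : Fin 2 → Fin 2 → Fin 2 → ℝ)
    (hC : ∀ i j k, C i j k = P i j k * u j k)
    (hD : ∀ i j k, D i j k = P i j k * v i k)
    (hE : ∀ i j k, E i j k = P i j k * w i j) :
    C 0 0 0 * C 1 1 0 * D 0 1 0 * D 1 0 0
      = C 0 1 0 * C 1 0 0 * D 0 0 0 * D 1 1 0 ∧
    C 0 0 0 * D 1 0 0 * E 1 1 0 * D 1 1 1 * C 1 0 1 * E 0 0 1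
      = C 1 0 0 * D 1 1 0 * E 1 1 1 * D 1 0 1 * C 0 0 1 * E 0 0 0 ∧
    C 0 0 0 * D 1 0 0 * E 1 1 0 * C 1 1 1 * D 0 1 1 * E 0 0 1
      = C 1 0 0 * D 1 1 0 * E 1 1 1 * C 0 1 1 * D 0 0 1 * E 0 0 0 ∧
    C 0 0 0 * D 1 0 0 * C 1 1 0 * E 0 1 0 * C 0 1 1 * D 1 1 1 * C 1 0 1 * E 0 0 1
      = C 1 0 0 * D 1 1 0 * C 0 1 0 * E 0 1 1 * C 1 1 1 * D 1 0 1 * C 0 0 1 * E 0 0 0 := by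
  refine ⟨?_, ?_, ?_, ?_⟩ <;> simp only [hC, hD, hE] <;> ring
end

section
/- Let A be the incidence matrix of a bipartite graph G and let I_A be its toric ideal. For any circuit c of G that has a chord in G, the circuit binomial f_c lies in the ideal generated by the circuit binomials of two shorter circuits of G obtained by splitting c along the chord. Consequently, I_A is generated by the circuit binomials of the induced (chordless) circuits of G. -/
/-!
The kernel of `x_e ↦ t_u t_v` is spanned by the binomials `x^α - x^β` with `Aα = Aβ`: group the
terms of a kernel element by the image of their exponent. For such a binomial, either `α` and `β`
share an edge, which factors out, or following edges of `supp α` and `supp β` alternately must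
close up into a circuit `c` with `x^{c⁺} ∣ x^α` and `x^{c⁻} ∣ x^β`; then
`x^α - x^β = x^{α-c⁺} f_c + x^{c⁻} (x^{α-c⁺} - x^{β-c⁻})` lowers the degree. Finally a chord
splits `c` into two shorter circuits `c₁, c₂` with `f_c ∈ (f_{c₁}, f_{c₂})`, so induction on the
length reduces every circuit binomial to induced ones.
-/
set_option autoImplicit false

open MvPolynomial

/-- A circuit of a bipartite graph whose edges `E` have endpoints `epU e ∈ U`, `epV e ∈ V`. -/
structure BipCircuit {U V E : Type*} (epU : E → U) (epV : E → V) where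
  r : ℕ
  two_le : 2 ≤ r
  u : ℕ → U
  v : ℕ → V
  a : ℕ → E
  b : ℕ → E
  haU : ∀ t < r, epU (a t) = u t
  haV : ∀ t < r, epV (a t) = v t
  hbU : ∀ t < r, epU (b t) = u ((t + 1) % r)
  hbV : ∀ t < r, epV (b t) = v t
  injU : ∀ s < r, ∀ t < r, u s = u t → s = t
  injV : ∀ s < r, ∀ t < r, v s = v t → s = t

/-- The circuit binomial `f_c = ∏ x_{a t} − ∏ x_{b t}` of a circuit `c`. -/
noncomputable def circuitBinomial {U V E : Type*} (k : Type*) [CommRing k]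
    {epU : E → U} {epV : E → V} (c : BipCircuit epU epV) : MvPolynomial E k :=
  (∏ t ∈ Finset.range c.r, X (c.a t)) - ∏ t ∈ Finset.range c.r, X (c.b t)

/-- `e` is an edge of the circuit `c`. -/
def BipCircuit.MemEdges {U V E : Type*} {epU : E → U} {epV : E → V}
    (c : BipCircuit epU epV) (e : E) : Prop :=
  ∃ t < c.r, c.a t = e ∨ c.b t = e

/-- `e` is a chord of the circuit `c` joining the non-consecutive vertices `u s` and `v t`. -/
def BipCircuit.IsChordAt {U V E : Type*} {epU : E → U} {epV : E → V}
    (c : BipCircuit epU epV) (e : E) (s t : ℕ) : Prop :=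
  s < c.r ∧ t < c.r ∧ epU e = c.u s ∧ epV e = c.v t ∧ t ≠ s ∧ s ≠ (t + 1) % c.r

/-- A circuit is induced (chordless) if it has no chord. -/
def BipCircuit.IsInduced {U V E : Type*} {epU : E → U} {epV : E → V}
    (c : BipCircuit epU epV) : Prop :=
  ¬ ∃ e s t, c.IsChordAt e s t


@[to_additive]
theorem Finset.prod_range_add_mod {M : Type*} [CommMonoid M] (f : ℕ → M) (r k : ℕ) :
    ∏ i ∈ range r, f ((i + k) % r) = ∏ i ∈ range r, f i := by
  rcases Nat.eq_zero_or_pos r with rfl | hr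
  · simp
  have : NeZero r := ⟨hr.ne'⟩
  rw [← Fin.prod_univ_eq_prod_range (fun i => f ((i + k) % r)), ← Fin.prod_univ_eq_prod_range]
  exact Fintype.prod_equiv (Equiv.addRight (Fin.ofNat r k)) _ _ fun i => by simp [Fin.val_add]

theorem Finset.prod_range_succ_ite {M : Type*} [CommMonoid M] (f : ℕ → M) (n : ℕ) (x : M) :
    ∏ i ∈ range (n + 1), (if i = n then x else f i) = (∏ i ∈ range n, f i) * x := by
  rw [prod_range_succ, if_pos rfl]
  exact congrArg (· * x) (prod_congr rfl fun i hi => if_neg (mem_range.mp hi).ne)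

theorem Nat.eq_of_lt_of_add_mod_eq {r s t k : ℕ} (hs : s < r) (ht : t < r)
    (h : (s + k) % r = (t + k) % r) : s = t := by
  have := Nat.ModEq.add_right_cancel' k h
  rwa [Nat.ModEq, Nat.mod_eq_of_lt hs, Nat.mod_eq_of_lt ht] at this

theorem Set.injOn_Iio_of_forall_lt_ne {α : Type*} {f : ℕ → α} {n : ℕ}
    (h : ∀ p q, p < q → q < n → f p ≠ f q) : Set.InjOn f (Set.Iio n) := by
  intro s hs t ht hst
  rcases lt_trichotomy s t with hlt | heq | hlt
  exacts [absurd hst (h s t hlt ht), heq, absurd hst.symm (h t s hlt hs)]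

theorem Finsupp.sum_single_one_le {ι σ : Type*} (s : Finset ι) {f : ι → σ} (hf : Set.InjOn f s)
    {α : σ →₀ ℕ} (h : ∀ i ∈ s, α (f i) ≠ 0) : ∑ i ∈ s, single (f i) 1 ≤ α := by
  classical
  rw [← Finset.sum_image (f := fun x => single x 1) hf]
  intro x
  simp only [Finsupp.finsetSum_apply, Finsupp.single_apply, Finset.sum_ite_eq']
  split_ifs with hx
  · obtain ⟨i, hi, rfl⟩ := Finset.mem_image.mp hx
    exact Nat.one_le_iff_ne_zero.mpr (h i hi)
  · exact Nat.zero_le _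

theorem MvPolynomial.ker_le_span_monomial_sub {R σ τ : Type*} [CommRing R]
    (φ : MvPolynomial σ R →ₐ[R] MvPolynomial τ R) (D : (σ →₀ ℕ) → τ →₀ ℕ)
    (hφ : ∀ α, φ (monomial α 1) = monomial (D α) 1) :
    RingHom.ker φ ≤ Ideal.span {f | ∃ α β, D α = D β ∧ f = monomial α 1 - monomial β 1} := by
  classical
  intro f hf
  have hφc : ∀ α c, φ (monomial α c) = monomial (D α) c := fun α c => by
    rw [← mul_one c, ← smul_eq_mul, ← smul_monomial, map_smul, hφ, smul_monomial]
  have hfibre : ∀ d, ∑ γ ∈ f.support with D γ = d, coeff γ f = 0 := fun d => by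
    have h := RingHom.mem_ker.mp hf
    rw [f.as_sum, map_sum] at h
    simpa only [hφc, coeff_sum, coeff_monomial, coeff_zero, Finset.sum_filter]
      using congrArg (coeff d) h
  -- Each monomial is traded for a fixed representative of its fibre; the representatives cancel.
  set ρ : (σ →₀ ℕ) → σ →₀ ℕ := fun γ => Function.invFun D (D γ)
  have hρ : ∑ γ ∈ f.support, monomial (ρ γ) (coeff γ f) = 0 := by
    rw [← Finset.sum_fiberwise_of_maps_to fun γ hγ => Finset.mem_image_of_mem D hγ]
    refine Finset.sum_eq_zero fun d _ => ?_
    rw [Finset.sum_congr rfl fun γ hγ => show monomial (ρ γ) _ = monomial (Function.invFun D d) _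
      by rw [← (Finset.mem_filter.mp hγ).2], ← map_sum (monomial (Function.invFun D d)), hfibre,
      map_zero]
  have hf_eq : f = ∑ γ ∈ f.support, coeff γ f • (monomial γ 1 - monomial (ρ γ) 1) := by
    simp only [smul_sub, smul_monomial, smul_eq_mul, mul_one, Finset.sum_sub_distrib, hρ,
      sub_zero]
    exact f.as_sum
  rw [hf_eq]
  exact Ideal.sum_mem _ fun γ _ => Submodule.smul_of_tower_mem _ _
    (Ideal.subset_span ⟨γ, ρ γ, (Function.invFun_eq ⟨γ, rfl⟩).symm, rfl⟩)

theorem Set.Finite.exists_lt_map_eq_and_injOn {α : Type*} {f : ℕ → α}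
    (hf : (Set.range f).Finite) : ∃ i j, i < j ∧ f i = f j ∧ Set.InjOn f (Set.Iio j) := by
  classical
  have hrep : ∃ j, ∃ i < j, f i = f j :=
    let ⟨i, j, hij, h⟩ := hf.exists_lt_map_eq_of_forall_mem (Set.mem_range_self ·)
    ⟨j, i, hij, h⟩
  obtain ⟨i, hij, h⟩ := Nat.find_spec hrep
  exact ⟨i, _, hij, h, Set.injOn_Iio_of_forall_lt_ne fun p q hpq hq hpq' =>
    Nat.find_min hrep hq ⟨p, hpq, hpq'⟩⟩

namespace BipCircuit

variable {U V E : Type*} {epU : E → U} {epV : E → V}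

theorem r_pos (c : BipCircuit epU epV) : 0 < c.r :=
  lt_of_lt_of_le two_pos c.two_le

theorem injOn_a (c : BipCircuit epU epV) : Set.InjOn c.a (Finset.range c.r) := by
  intro s hs t ht h
  rw [Finset.coe_range, Set.mem_Iio] at hs ht
  exact c.injU s hs t ht (by rw [← c.haU s hs, ← c.haU t ht, h])

theorem injOn_b (c : BipCircuit epU epV) : Set.InjOn c.b (Finset.range c.r) := by
  intro s hs t ht h
  rw [Finset.coe_range, Set.mem_Iio] at hs ht
  exact c.injV s hs t ht (by rw [← c.hbV s hs, ← c.hbV t ht, h])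

def ofPath (r : ℕ) (hr : 2 ≤ r) (u : ℕ → U) (v : ℕ → V) (a b : ℕ → E)
    (haU : ∀ t < r, epU (a t) = u t) (haV : ∀ t < r, epV (a t) = v t)
    (hbU : ∀ t, t + 1 < r → epU (b t) = u (t + 1)) (hbU_last : epU (b (r - 1)) = u 0)
    (hbV : ∀ t < r, epV (b t) = v t)
    (injU : ∀ s < r, ∀ t < r, u s = u t → s = t) (injV : ∀ s < r, ∀ t < r, v s = v t → s = t) :
    BipCircuit epU epV where
  r := r
  two_le := hr
  u := u
  v := v
  a := a
  b := b
  haU := haU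
  haV := haV
  hbU t ht := by
    rcases Nat.lt_or_ge (t + 1) r with h | h
    · rw [Nat.mod_eq_of_lt h, hbU t h]
    · obtain rfl : t = r - 1 := by omega
      rw [Nat.sub_add_cancel (by omega), Nat.mod_self, hbU_last]
  hbV := hbV
  injU := injU
  injV := injV

def rotate (c : BipCircuit epU epV) (k : ℕ) : BipCircuit epU epV where
  r := c.r
  two_le := c.two_le
  u n := c.u ((n + k) % c.r)
  v n := c.v ((n + k) % c.r)
  a n := c.a ((n + k) % c.r)
  b n := c.b ((n + k) % c.r)
  haU _ _ := c.haU _ (Nat.mod_lt _ c.r_pos)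
  haV _ _ := c.haV _ (Nat.mod_lt _ c.r_pos)
  hbU n _ := by
    rw [c.hbU _ (Nat.mod_lt _ c.r_pos), Nat.mod_add_mod, Nat.mod_add_mod, Nat.add_right_comm]
  hbV _ _ := c.hbV _ (Nat.mod_lt _ c.r_pos)
  injU s hs t ht h :=
    Nat.eq_of_lt_of_add_mod_eq hs ht (c.injU _ (Nat.mod_lt _ c.r_pos) _ (Nat.mod_lt _ c.r_pos) h)
  injV s hs t ht h :=
    Nat.eq_of_lt_of_add_mod_eq hs ht (c.injV _ (Nat.mod_lt _ c.r_pos) _ (Nat.mod_lt _ c.r_pos) h)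

theorem circuitBinomial_rotate (k : Type*) [CommRing k] (c : BipCircuit epU epV) (n : ℕ) :
    circuitBinomial k (c.rotate n) = circuitBinomial k c :=
  congrArg₂ (· - ·) (Finset.prod_range_add_mod (fun t => X (c.a t)) c.r n)
    (Finset.prod_range_add_mod (fun t => X (c.b t)) c.r n)

theorem MemEdges.of_rotate {c : BipCircuit epU epV} {n : ℕ} {e : E}
    (h : (c.rotate n).MemEdges e) : c.MemEdges e :=
  let ⟨t, _, he⟩ := h
  ⟨(t + n) % c.r, Nat.mod_lt _ c.r_pos, he⟩

theorem exists_split_of_chord_last (k : Type*) [CommRing k] (c : BipCircuit epU epV) (e : E)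
    (p m : ℕ) (hr : c.r = p + m + 3) (heU : epU e = c.u (p + 1))
    (heV : epV e = c.v (p + m + 2)) :
    ∃ c1 c2 : BipCircuit epU epV, c1.r < c.r ∧ c2.r < c.r ∧
      (∀ e', c1.MemEdges e' → c.MemEdges e' ∨ e' = e) ∧
      (∀ e', c2.MemEdges e' → c.MemEdges e' ∨ e' = e) ∧
      circuitBinomial k c ∈ Ideal.span {circuitBinomial k c1, circuitBinomial k c2} := by
  -- `c1 = u 0, v 0, …, u (p + 1), v (p + m + 2)` and `c2 = u (p + 1), …, v (p + m + 2)`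
  let c1 : BipCircuit epU epV := ofPath (p + 2) le_add_self c.u
    (fun n => if n = p + 1 then c.v (p + m + 2) else c.v n)
    (fun n => if n = p + 1 then e else c.a n)
    (fun n => if n = p + 1 then c.b (p + m + 2) else c.b n)
    (fun t ht => by split_ifs with h; exacts [h ▸ heU, c.haU t (by omega)])
    (fun t ht => by split_ifs; exacts [heV, c.haV t (by omega)])
    (fun t ht => by rw [if_neg (by omega), c.hbU t (by omega), Nat.mod_eq_of_lt (by omega)])
    (by rw [if_pos (by omega), c.hbU _ (by omega), ← hr, Nat.mod_self])
    (fun t ht => by split_ifs; exacts [c.hbV _ (by omega), c.hbV t (by omega)])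
    (fun s hs t ht h => c.injU s (by omega) t (by omega) h)
    (fun s hs t ht h => by
      split_ifs at h with h1 h2 h2
      · omega
      · exact absurd (c.injV _ (by omega) t (by omega) h) (by omega)
      · exact absurd (c.injV s (by omega) _ (by omega) h) (by omega)
      · exact c.injV s (by omega) t (by omega) h)
  let c2 : BipCircuit epU epV := ofPath (m + 2) le_add_self
    (fun n => c.u (p + 1 + n)) (fun n => c.v (p + 1 + n)) (fun n => c.a (p + 1 + n))
    (fun n => if n = m + 1 then e else c.b (p + 1 + n))
    (fun t ht => c.haU _ (by omega)) (fun t ht => c.haV _ (by omega))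
    (fun t ht => by rw [if_neg (by omega), c.hbU _ (by omega), Nat.mod_eq_of_lt (by omega)]; rfl)
    (by rw [if_pos (by omega), heU])
    (fun t ht => by
      split_ifs with h
      · rw [heV, h]; ring_nf
      · exact c.hbV _ (by omega))
    (fun s hs t ht h => by have := c.injU _ (by omega) _ (by omega) h; omega)
    (fun s hs t ht h => by have := c.injV _ (by omega) _ (by omega) h; omega)
  refine ⟨c1, c2, by simp [c1, ofPath, hr], by simp [c2, ofPath, hr], ?_, ?_, ?_⟩
  · rintro e' ⟨t, ht, he'⟩
    simp only [c1, ofPath] at ht he'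
    split_ifs at he' with h
    · exact he'.elim (fun he' => Or.inr he'.symm) fun he' => Or.inl ⟨_, by omega, Or.inr he'⟩
    · exact Or.inl ⟨t, by omega, he'⟩
  · rintro e' ⟨t, ht, he'⟩
    simp only [c2, ofPath] at ht he'
    split_ifs at he' with h
    · exact he'.elim (fun he' => Or.inl ⟨_, by omega, Or.inl he'⟩) fun he' => Or.inr he'.symm
    · exact Or.inl ⟨_, by omega, he'⟩
  -- with `A₁ = ∏_{n ≤ p} a n` and `B₂ = ∏_{p < n < p + m + 2} b n`: `f_c = B₂ f_{c1} + A₁ f_{c2}`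
  have hA : ∏ n ∈ Finset.range c.r, (X (c.a n) : MvPolynomial E k) =
      (∏ n ∈ Finset.range (p + 1), X (c.a n)) *
        ∏ n ∈ Finset.range (m + 2), X (c.a (p + 1 + n)) := by
    rw [hr, show p + m + 3 = p + 1 + (m + 2) by ring, Finset.prod_range_add]
  have hB : ∏ n ∈ Finset.range c.r, (X (c.b n) : MvPolynomial E k) =
      (∏ n ∈ Finset.range (p + 1), X (c.b n)) *
        ((∏ n ∈ Finset.range (m + 1), X (c.b (p + 1 + n))) * X (c.b (p + m + 2))) := by
    rw [hr, show p + m + 3 = p + 1 + (m + 2) by ring, Finset.prod_range_add,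
      Finset.prod_range_succ (fun n => X (c.b (p + 1 + n))),
      show p + 1 + (m + 1) = p + m + 2 by ring]
  rw [Ideal.mem_span_pair]
  refine ⟨∏ n ∈ Finset.range (m + 1), X (c.b (p + 1 + n)),
    ∏ n ∈ Finset.range (p + 1), X (c.a n), ?_⟩
  simp only [circuitBinomial, c1, c2, ofPath, apply_ite (X : E → MvPolynomial E k),
    Finset.prod_range_succ_ite, hA, hB]
  ring

-- Rotating `c` by `t + 1` moves the chord to one ending at the last `v`-vertex.
theorem exists_split_of_isChordAt (k : Type*) [CommRing k] (c : BipCircuit epU epV) (e : E)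
    (s t : ℕ) (hc : c.IsChordAt e s t) :
    ∃ c1 c2 : BipCircuit epU epV, c1.r < c.r ∧ c2.r < c.r ∧
      (∀ e', c1.MemEdges e' → c.MemEdges e' ∨ e' = e) ∧
      (∀ e', c2.MemEdges e' → c.MemEdges e' ∨ e' = e) ∧
      circuitBinomial k c ∈ Ideal.span {circuitBinomial k c1, circuitBinomial k c2} := by
  obtain ⟨hs, ht, heU, heV, hts, hst⟩ := hc
  set s' := (s + c.r - (t + 1)) % c.r
  have hs' : (s' + (t + 1)) % c.r = s := by
    rw [Nat.mod_add_mod, Nat.sub_add_cancel (by omega), Nat.add_mod_right, Nat.mod_eq_of_lt hs]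
  have hlast : (c.r - 1 + (t + 1)) % c.r = t := by
    rw [show c.r - 1 + (t + 1) = t + c.r by omega, Nat.add_mod_right, Nat.mod_eq_of_lt ht]
  have hs'0 : s' ≠ 0 := fun h => hst (by rw [← hs', h, Nat.zero_add])
  have hs'r : s' ≠ c.r - 1 := fun h => hts (by rw [← hs', h, hlast])
  have hs'lt : s' < c.r := Nat.mod_lt _ c.r_pos
  obtain ⟨c1, c2, h1, h2, he1, he2, hmem⟩ := exists_split_of_chord_last k (c.rotate (t + 1)) e
    (s' - 1) (c.r - s' - 2) (by simp only [rotate]; omega)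
    (by simp only [rotate]; rwa [Nat.sub_add_cancel (by omega), hs'])
    (by simp only [rotate]; rwa [show s' - 1 + (c.r - s' - 2) + 2 = c.r - 1 by omega, hlast])
  refine ⟨c1, c2, h1, h2, fun e' h => (he1 e' h).imp_left MemEdges.of_rotate,
    fun e' h => (he2 e' h).imp_left MemEdges.of_rotate, ?_⟩
  rwa [circuitBinomial_rotate] at hmem

theorem circuitBinomial_mem_span_isInduced (k : Type*) [CommRing k] (c : BipCircuit epU epV) :
    circuitBinomial k c ∈
      Ideal.span {f | ∃ c : BipCircuit epU epV, c.IsInduced ∧ f = circuitBinomial k c} := by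
  by_cases hind : c.IsInduced
  · exact Ideal.subset_span ⟨c, hind, rfl⟩
  obtain ⟨e, s, t, hchord⟩ := not_not.mp hind
  obtain ⟨c1, c2, h1, h2, -, -, hmem⟩ := exists_split_of_isChordAt k c e s t hchord
  refine Ideal.span_le.mpr ?_ hmem
  rintro _ (rfl | rfl)
  exacts [circuitBinomial_mem_span_isInduced k c1, circuitBinomial_mem_span_isInduced k c2]
termination_by c.r

end BipCircuit

section Incidence

variable {U V E : Type*} (epU : E → U) (epV : E → V)

-- The incidence matrix `A` acting on exponent vectors.
noncomputable def incidenceMap : (E →₀ ℕ) →+ (U ⊕ V →₀ ℕ) where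
  toFun α := (α.mapDomain epU).sumElim (α.mapDomain epV)
  map_zero' := by simp
  map_add' α β := by simp [Finsupp.mapDomain_add, Finsupp.sumElim_add]

theorem incidenceMap_single (e : E) (n : ℕ) :
    incidenceMap epU epV (Finsupp.single e n) =
      Finsupp.single (Sum.inl (epU e)) n + Finsupp.single (Sum.inr (epV e)) n := by
  simp [incidenceMap]

theorem incidenceMap_inl_ne_zero_iff (α : E →₀ ℕ) (u : U) :
    incidenceMap epU epV α (Sum.inl u) ≠ 0 ↔ ∃ e, α e ≠ 0 ∧ epU e = u := by
  classical
  rw [← Finsupp.mem_support_iff]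
  simp [incidenceMap, Finsupp.mapDomain_support_of_subsingletonAddUnits]

theorem incidenceMap_inr_ne_zero_iff (α : E →₀ ℕ) (v : V) :
    incidenceMap epU epV α (Sum.inr v) ≠ 0 ↔ ∃ e, α e ≠ 0 ∧ epV e = v := by
  classical
  rw [← Finsupp.mem_support_iff]
  simp [incidenceMap, Finsupp.mapDomain_support_of_subsingletonAddUnits]

theorem incidenceMap_eq_zero_iff (α : E →₀ ℕ) : incidenceMap epU epV α = 0 ↔ α = 0 := by
  refine ⟨fun h => Finsupp.ext fun e => ?_, fun h => h ▸ map_zero _⟩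
  by_contra he
  exact (incidenceMap_inl_ne_zero_iff epU epV α (epU e)).mpr ⟨e, he, rfl⟩ (by rw [h]; rfl)

theorem aeval_monomial_eq_monomial_incidenceMap (k : Type*) [CommRing k] (α : E →₀ ℕ) :
    aeval (fun e => (X (Sum.inl (epU e)) * X (Sum.inr (epV e)) : MvPolynomial (U ⊕ V) k))
      (monomial α (1 : k)) = monomial (incidenceMap epU epV α) 1 := by
  induction α using Finsupp.induction with
  | zero => simp
  | single_add e n α _ _ ih =>
    rw [monomial_single_add, map_mul, ih, map_pow, aeval_X, map_add, incidenceMap_single, mul_pow,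
      X_pow_eq_monomial, X_pow_eq_monomial, monomial_mul, monomial_mul, one_mul, one_mul]

end Incidence

namespace BipCircuit

variable {U V E : Type*} {epU : E → U} {epV : E → V}

noncomputable def aExp (c : BipCircuit epU epV) : E →₀ ℕ :=
  ∑ t ∈ Finset.range c.r, Finsupp.single (c.a t) 1

noncomputable def bExp (c : BipCircuit epU epV) : E →₀ ℕ :=
  ∑ t ∈ Finset.range c.r, Finsupp.single (c.b t) 1

theorem circuitBinomial_eq (k : Type*) [CommRing k] (c : BipCircuit epU epV) :
    circuitBinomial k c = monomial c.aExp 1 - monomial c.bExp 1 := by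
  simp only [circuitBinomial, aExp, bExp, monomial_sum_one]
  rfl

theorem degree_aExp (c : BipCircuit epU epV) : c.aExp.degree = c.r := by
  simp [aExp]

theorem incidenceMap_aExp (c : BipCircuit epU epV) :
    incidenceMap epU epV c.aExp = incidenceMap epU epV c.bExp := by
  simp only [aExp, bExp, map_sum, incidenceMap_single, Finset.sum_add_distrib]
  congr 1
  · calc ∑ t ∈ Finset.range c.r, Finsupp.single (Sum.inl (epU (c.a t))) 1
        = ∑ t ∈ Finset.range c.r, Finsupp.single (Sum.inl (c.u t)) 1 :=
          Finset.sum_congr rfl fun t ht => by rw [c.haU t (Finset.mem_range.mp ht)]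
      _ = ∑ t ∈ Finset.range c.r, Finsupp.single (Sum.inl (c.u ((t + 1) % c.r))) 1 :=
          (Finset.sum_range_add_mod (fun t => Finsupp.single (Sum.inl (c.u t)) 1) c.r 1).symm
      _ = ∑ t ∈ Finset.range c.r, Finsupp.single (Sum.inl (epU (c.b t))) 1 :=
          Finset.sum_congr rfl fun t ht => by rw [c.hbU t (Finset.mem_range.mp ht)]
  · exact Finset.sum_congr rfl fun t ht => by
      rw [c.haV t (Finset.mem_range.mp ht), c.hbV t (Finset.mem_range.mp ht)]

theorem aeval_circuitBinomial (k : Type*) [CommRing k] (c : BipCircuit epU epV) :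
    aeval (fun e => (X (Sum.inl (epU e)) * X (Sum.inr (epV e)) : MvPolynomial (U ⊕ V) k))
      (circuitBinomial k c) = 0 := by
  rw [circuitBinomial_eq, map_sub, aeval_monomial_eq_monomial_incidenceMap epU epV k,
    aeval_monomial_eq_monomial_incidenceMap epU epV k, incidenceMap_aExp, sub_self]

theorem exists_of_walk (hsimple : ∀ e1 e2 : E, epU e1 = epU e2 → epV e1 = epV e2 → e1 = e2)
    (a : U → E) (b : V → E) (x : ℕ → U) (ha : ∀ n, epU (a (x n)) = x n)
    (hb : ∀ n, epV (b (epV (a (x n)))) = epV (a (x n)))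
    (hx : ∀ n, x (n + 1) = epU (b (epV (a (x n))))) (hab : ∀ n, a (x n) ≠ b (epV (a (x n))))
    (hfin : (Set.range x).Finite) :
    ∃ c : BipCircuit epU epV,
      (∀ t < c.r, ∃ n, c.a t = a (x n)) ∧ ∀ t < c.r, ∃ n, c.b t = b (epV (a (x n))) := by
  obtain ⟨i, j, hij, hxij, hinj⟩ := hfin.exists_lt_map_eq_and_injOn
  have hlen : 2 ≤ j - i := by
    by_contra
    obtain rfl : j = i + 1 := by omega
    exact hab i (hsimple _ _ ((ha i).trans (hxij.trans (hx i))) (hb i).symm)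
  refine ⟨ofPath (j - i) hlen (fun n => x (i + n)) (fun n => epV (a (x (i + n))))
    (fun n => a (x (i + n))) (fun n => b (epV (a (x (i + n)))))
    (fun n _ => ha _) (fun _ _ => rfl) (fun n _ => (hx (i + n)).symm)
    (by rw [← hx, show i + (j - i - 1) + 1 = j by omega, ← hxij]; rfl) (fun n _ => hb _)
    (fun s hs t ht h => ?_) (fun s hs t ht h => ?_), fun t _ => ⟨i + t, rfl⟩,
    fun t _ => ⟨i + t, rfl⟩⟩
  · have := hinj (Set.mem_Iio.mpr (by omega : i + s < j)) (Set.mem_Iio.mpr (by omega)) h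
    omega
  -- a repeated `v`-vertex would repeat the next `u`-vertex, `b` being a function of `v`
  refine Set.injOn_Iio_of_forall_lt_ne (f := fun n => epV (a (x (i + n))))
    (fun p q hpq hq hpq' => ?_) hs ht h
  have hx' : x (i + p + 1) = x (i + q + 1) := by rw [hx, hx, hpq']
  rcases Nat.lt_or_ge (i + q + 1) j with hq' | hq'
  · exact absurd (hinj (Set.mem_Iio.mpr (by omega)) (Set.mem_Iio.mpr hq') hx') (by omega)
  · have hp : i + p + 1 ∈ Set.Iio j := Set.mem_Iio.mpr (by omega)
    refine absurd (hinj (Set.mem_Iio.mpr hij) hp ?_) (by omega)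
    rw [hxij, hx', show i + q + 1 = j by omega]

theorem exists_of_alternating
    (hsimple : ∀ e1 e2 : E, epU e1 = epU e2 → epV e1 = epV e2 → e1 = e2)
    (P Q : E → Prop) (hPQ : ∀ e, P e → ¬ Q e) (hfin : {e | P e}.Finite)
    (hP : ∀ e, P e → ∃ e', Q e' ∧ epV e' = epV e) (hQ : ∀ e, Q e → ∃ e', P e' ∧ epU e' = epU e)
    (e₀ : E) (he₀ : P e₀) :
    ∃ c : BipCircuit epU epV, (∀ t < c.r, P (c.a t)) ∧ ∀ t < c.r, Q (c.b t) := by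
  have : Nonempty E := ⟨e₀⟩
  have hA : ∀ u, (∃ e, Q e ∧ epU e = u) → ∃ e', P e' ∧ epU e' = u := by
    rintro _ ⟨e, he, rfl⟩
    exact hQ e he
  have hB : ∀ v, (∃ e, P e ∧ epV e = v) → ∃ e', Q e' ∧ epV e' = v := by
    rintro _ ⟨e, he, rfl⟩
    exact hP e he
  choose! aP haP using hA
  choose! bQ hbQ using hB
  set x : ℕ → U := fun n => (fun u => epU (bQ (epV (aP u))))^[n] (epU (bQ (epV e₀)))
  have hx : ∀ n, x (n + 1) = epU (bQ (epV (aP (x n)))) := fun n =>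
    Function.iterate_succ_apply' _ _ _
  have hxQ : ∀ n, ∃ e, Q e ∧ epU e = x n := by
    intro n
    induction n with
    | zero => exact ⟨_, (hbQ _ ⟨e₀, he₀, rfl⟩).1, rfl⟩
    | succ n ih => exact ⟨_, (hbQ _ ⟨_, (haP _ ih).1, rfl⟩).1, (hx n).symm⟩
  have ha : ∀ n, P (aP (x n)) ∧ epU (aP (x n)) = x n := fun n => haP _ (hxQ n)
  have hb : ∀ n, Q (bQ (epV (aP (x n)))) ∧ epV (bQ (epV (aP (x n)))) = epV (aP (x n)) :=
    fun n => hbQ _ ⟨_, (ha n).1, rfl⟩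
  obtain ⟨c, hca, hcb⟩ := exists_of_walk hsimple aP bQ x (fun n => (ha n).2) (fun n => (hb n).2)
    hx (fun n h => hPQ _ (ha n).1 (h ▸ (hb n).1))
    ((hfin.image epU).subset (Set.range_subset_iff.mpr fun n => ⟨_, (ha n).1, (ha n).2⟩))
  refine ⟨c, fun t ht => ?_, fun t ht => ?_⟩
  · obtain ⟨n, hn⟩ := hca t ht
    exact hn ▸ (ha n).1
  · obtain ⟨n, hn⟩ := hcb t ht
    exact hn ▸ (hb n).1

end BipCircuit

section Binomials

variable {U V E : Type*} {epU : E → U} {epV : E → V} {k : Type*} [CommRing k]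

-- Either `α` and `β` share an edge, or their supports carry an alternating circuit.
theorem exists_le_incidenceMap_eq_of_incidenceMap_eq
    (hsimple : ∀ e1 e2 : E, epU e1 = epU e2 → epV e1 = epV e2 → e1 = e2)
    (J : Ideal (MvPolynomial E k)) (hJ : ∀ c : BipCircuit epU epV, circuitBinomial k c ∈ J)
    {α β : E →₀ ℕ}
    (hαβ : incidenceMap epU epV α = incidenceMap epU epV β) (hα : α ≠ 0) :
    ∃ A B : E →₀ ℕ, 0 < A.degree ∧ A ≤ α ∧ B ≤ β ∧
      incidenceMap epU epV A = incidenceMap epU epV B ∧ monomial A (1 : k) - monomial B 1 ∈ J := by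
  by_cases hcommon : ∃ e, α e ≠ 0 ∧ β e ≠ 0
  · obtain ⟨e, hαe, hβe⟩ := hcommon
    exact ⟨Finsupp.single e 1, Finsupp.single e 1, by simp,
      Finsupp.single_le_iff.mpr (by omega), Finsupp.single_le_iff.mpr (by omega), rfl,
      by rw [sub_self]; exact J.zero_mem⟩
  simp only [not_exists, not_and, not_not] at hcommon
  obtain ⟨e₀, he₀⟩ := Finsupp.ne_iff.mp hα
  obtain ⟨c, hca, hcb⟩ := BipCircuit.exists_of_alternating hsimple (fun e => α e ≠ 0)
    (fun e => β e ≠ 0) (fun e he hβe => hβe (hcommon e he)) α.hasFiniteSupport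
    (fun e he => (incidenceMap_inr_ne_zero_iff epU epV β _).mp
      (hαβ ▸ (incidenceMap_inr_ne_zero_iff epU epV α _).mpr ⟨e, he, rfl⟩))
    (fun e he => (incidenceMap_inl_ne_zero_iff epU epV α _).mp
      (hαβ ▸ (incidenceMap_inl_ne_zero_iff epU epV β _).mpr ⟨e, he, rfl⟩))
    e₀ he₀
  exact ⟨c.aExp, c.bExp, c.degree_aExp ▸ c.r_pos,
    Finsupp.sum_single_one_le _ c.injOn_a fun t ht => hca t (Finset.mem_range.mp ht),
    Finsupp.sum_single_one_le _ c.injOn_b fun t ht => hcb t (Finset.mem_range.mp ht),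
    c.incidenceMap_aExp, c.circuitBinomial_eq k ▸ hJ c⟩

theorem monomial_sub_mem_of_incidenceMap_eq
    (hsimple : ∀ e1 e2 : E, epU e1 = epU e2 → epV e1 = epV e2 → e1 = e2)
    (J : Ideal (MvPolynomial E k)) (hJ : ∀ c : BipCircuit epU epV, circuitBinomial k c ∈ J)
    {α β : E →₀ ℕ}
    (hαβ : incidenceMap epU epV α = incidenceMap epU epV β) :
    monomial α (1 : k) - monomial β 1 ∈ J := by
  by_cases hα : α = 0
  · obtain rfl : β = 0 := (incidenceMap_eq_zero_iff epU epV β).mp (by rw [← hαβ, hα, map_zero])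
    rw [hα, sub_self]
    exact J.zero_mem
  obtain ⟨A, B, hA, hAα, hBβ, hAB, hmem⟩ :=
    exists_le_incidenceMap_eq_of_incidenceMap_eq hsimple J hJ hαβ hα
  obtain ⟨α', rfl⟩ := exists_add_of_le hAα
  obtain ⟨β', rfl⟩ := exists_add_of_le hBβ
  have hα' : incidenceMap epU epV α' = incidenceMap epU epV β' := by
    rw [map_add, map_add, hAB] at hαβ
    exact add_left_cancel hαβ
  have : α'.degree < (A + α').degree := by rw [map_add]; omega
  have hmem' := monomial_sub_mem_of_incidenceMap_eq hsimple J hJ hα'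
  rw [show monomial (A + α') (1 : k) - monomial (B + β') 1 =
      monomial α' 1 * (monomial A 1 - monomial B 1) + monomial B 1 * (monomial α' 1 - monomial β' 1)
    by simp only [mul_sub, monomial_mul, one_mul, add_comm α']; ring]
  exact J.add_mem (J.mul_mem_left _ hmem) (J.mul_mem_left _ hmem')
termination_by α.degree

end Binomials

theorem toric_ideal_generated_by_induced_circuit_binomials_general
    {U V E : Type*}
    (k : Type*) [Field k] (epU : E → U) (epV : E → V)
    (hsimple : ∀ e1 e2 : E, epU e1 = epU e2 → epV e1 = epV e2 → e1 = e2) :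
    (∀ (c : BipCircuit epU epV) (e : E) (s t : ℕ), c.IsChordAt e s t →
      ∃ c1 c2 : BipCircuit epU epV, c1.r < c.r ∧ c2.r < c.r ∧
        (∀ e', c1.MemEdges e' → c.MemEdges e' ∨ e' = e) ∧
        (∀ e', c2.MemEdges e' → c.MemEdges e' ∨ e' = e) ∧
        circuitBinomial k c ∈
          Ideal.span {circuitBinomial k c1, circuitBinomial k c2}) ∧
    RingHom.ker (aeval (fun e => (X (Sum.inl (epU e)) * X (Sum.inr (epV e)) :
        MvPolynomial (U ⊕ V) k))).toRingHom
      = Ideal.span {f | ∃ c : BipCircuit epU epV, c.IsInduced ∧ f = circuitBinomial k c} := by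
  refine ⟨BipCircuit.exists_split_of_isChordAt k, le_antisymm ?_ ?_⟩
  · refine (MvPolynomial.ker_le_span_monomial_sub _ _
      (aeval_monomial_eq_monomial_incidenceMap epU epV k)).trans ?_
    rw [Ideal.span_le]
    rintro _ ⟨α, β, hαβ, rfl⟩
    exact monomial_sub_mem_of_incidenceMap_eq hsimple _
      (BipCircuit.circuitBinomial_mem_span_isInduced k) hαβ
  · rw [Ideal.span_le]
    rintro _ ⟨c, -, rfl⟩
    exact c.aeval_circuitBinomial k

/-- for the toric ideal of the incidence matrix of a finite simple bipartite
graph: (1) the circuit binomial of a circuit with a chord lies in the ideal generated by the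
circuit binomials of two shorter circuits obtained by splitting along the chord (their edges
being edges of `c` together with the chord); (2) consequently, the toric ideal — the kernel of
the monomial map `x_{uv} ↦ t_u t_v` — is generated by the circuit binomials of the induced
circuits. -/
theorem toric_ideal_generated_by_induced_circuit_binomials
    {U V E : Type*} [Fintype U] [Fintype V] [Fintype E]
    [DecidableEq U] [DecidableEq V] [DecidableEq E]
    (k : Type*) [Field k] (epU : E → U) (epV : E → V)
    (hsimple : ∀ e1 e2 : E, epU e1 = epU e2 → epV e1 = epV e2 → e1 = e2) :
    (∀ (c : BipCircuit epU epV) (e : E) (s t : ℕ), c.IsChordAt e s t →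
      ∃ c1 c2 : BipCircuit epU epV, c1.r < c.r ∧ c2.r < c.r ∧
        (∀ e', c1.MemEdges e' → c.MemEdges e' ∨ e' = e) ∧
        (∀ e', c2.MemEdges e' → c.MemEdges e' ∨ e' = e) ∧
        circuitBinomial k c ∈
          Ideal.span {circuitBinomial k c1, circuitBinomial k c2}) ∧
    RingHom.ker (aeval (fun e => (X (Sum.inl (epU e)) * X (Sum.inr (epV e)) :
        MvPolynomial (U ⊕ V) k))).toRingHom
      = Ideal.span {f | ∃ c : BipCircuit epU epV, c.IsInduced ∧ f = circuitBinomial k c} :=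
  toric_ideal_generated_by_induced_circuit_binomials_general k epU epV hsimple
end

section
/- Let C and D be nonnegative d1×d2 matrices with C_{ij} = 0 iff D_{ij} = 0, ∑_i C_{ij} = 1 for all j, ∑_j D_{ij} = 1 for all i, and suppose the common support S = {(i,j) : C_{ij} > 0} is 'connected' in the sense that the bipartite graph on [d1] ⊔ [d2] with edge set S is connected. If C and D satisfy all circuit binomial equations ∏_{t=1}^r C_{i_t j_t} D_{i_{t+1} j_t} = ∏_{t=1}^r D_{i_t j_t} C_{i_{t+1} j_t} for every circuit (i_1,j_1,...,i_r,j_r,i_1) of the support graph, then there exist positive reals u_i (i such that row i of D is nonzero), v_j, and nonnegative P_{ij} with C_{ij} = P_{ij} v_j and D_{ij} = P_{ij} u_i for all (i,j); hence C and D are compatible conditionals. -/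
set_option autoImplicit false

/-! Put the weight `log (C i j / D i j)` on the edge `i — j` of the support graph, with the
opposite sign when it is traversed from `j` to `i`. The circuit binomial equations say that the
weight of every cycle vanishes. Cutting off loops (`Walk.bypass`) then shows that every closed walk
has weight zero, so on each connected component the weight is the difference `F y - F x` of a
potential. With `u i = exp (F (inl i))` and `v j = exp (F (inr j))` this reads
`v j / u i = C i j / D i j` on the support, i.e. `C = P v` and `D = P u` for
`P i j = C i j / v j`. -/

/-- The bipartite support graph of a matrix `C`: left vertices `Fin d1`, right vertices
`Fin d2`, with an edge between `i` and `j` whenever `C i j > 0`. -/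
def supportGraph {d1 d2 : ℕ} (C : Fin d1 → Fin d2 → ℝ) :
    SimpleGraph (Fin d1 ⊕ Fin d2) where
  Adj x y := ∃ i j, 0 < C i j ∧
    ((x = Sum.inl i ∧ y = Sum.inr j) ∨ (x = Sum.inr j ∧ y = Sum.inl i))
  symm := by
    constructor
    rintro x y ⟨i, j, hpos, (⟨hx, hy⟩ | ⟨hx, hy⟩)⟩
    · exact ⟨i, j, hpos, Or.inr ⟨hy, hx⟩⟩
    · exact ⟨i, j, hpos, Or.inl ⟨hy, hx⟩⟩
  loopless := by
    constructor
    rintro x ⟨i, j, hpos, (⟨hx, hy⟩ | ⟨hx, hy⟩)⟩ <;> simp_all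

namespace SimpleGraph

variable {V α : Type*} [AddCommGroup α] {G : SimpleGraph V}

namespace Walk

variable (w : V → V → α)

def weight {u v : V} (p : G.Walk u v) : α :=
  (p.darts.map fun d => w d.fst d.snd).sum

@[simp] lemma weight_nil {u : V} : (nil : G.Walk u u).weight w = 0 := rfl

@[simp] lemma weight_cons {u v x : V} (h : G.Adj u v) (p : G.Walk v x) :
    (cons h p).weight w = w u v + p.weight w := by
  simp [weight]

@[simp] lemma weight_append {u v x : V} (p : G.Walk u v) (q : G.Walk v x) :
    (p.append q).weight w = p.weight w + q.weight w := by
  simp [weight]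

@[simp] lemma weight_copy {u v u' v' : V} (p : G.Walk u v) (hu : u = u') (hv : v = v') :
    (p.copy hu hv).weight w = p.weight w := by
  subst hu hv
  rfl

lemma weight_reverse (hw : ∀ x y, w y x = -w x y) {u v : V} (p : G.Walk u v) :
    p.reverse.weight w = -p.weight w := by
  induction p with
  | nil => simp
  | cons h p ih =>
    rw [reverse_cons, weight_append, ih, weight_cons, weight_cons, weight_nil, hw]
    abel

lemma weight_rotate [DecidableEq V] {u v : V} (c : G.Walk v v) (h : u ∈ c.support) :
    (c.rotate u h).weight w = c.weight w :=
  ((c.rotate_darts u h).perm.map _).sum_eq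

lemma weight_eq_sum_getVert {u v : V} (p : G.Walk u v) :
    p.weight w = ∑ n ∈ Finset.range p.length, w (p.getVert n) (p.getVert (n + 1)) := by
  induction p with
  | nil => simp
  | cons h p ih =>
    rw [weight_cons, ih, length_cons, Finset.sum_range_succ']
    simp only [getVert_cons_succ, getVert_zero, zero_add]
    rw [add_comm]

section Conservative

variable {w} (hw : ∀ x y, w y x = -w x y)
  (hcyc : ∀ x (c : G.Walk x x), c.IsCycle → c.weight w = 0)
include hw hcyc

lemma weight_cons_eq_zero_of_isPath {u v : V} (h : G.Adj u v) {q : G.Walk v u}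
    (hq : q.IsPath) : (cons h q).weight w = 0 := by
  rcases q with _ | ⟨h', _ | ⟨h'', q⟩⟩
  · exact absurd rfl h.ne
  · simp [hw u]
  · refine hcyc _ _ (isCycle_iff_isPath_tail_and_le_length.2 ⟨?_, ?_⟩)
    · simpa using hq
    · simp

lemma weight_bypass [DecidableEq V] {u v : V} (p : G.Walk u v) :
    p.bypass.weight w = p.weight w := by
  induction p with
  | nil => rfl
  | @cons u v x h p ih =>
    rw [bypass]
    split_ifs with hs
    · have hloop := weight_cons_eq_zero_of_isPath hw hcyc h (p.bypass_isPath.takeUntil hs)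
      have hsplit : p.bypass.weight w
          = (p.bypass.takeUntil u hs).weight w + (p.bypass.dropUntil u hs).weight w := by
        rw [← weight_append, take_spec]
      rw [weight_cons] at hloop
      rw [weight_cons, ← ih, hsplit, ← add_assoc, hloop, zero_add]
    · rw [weight_cons, weight_cons, ih]

lemma weight_eq_zero_of_closed {u : V} (p : G.Walk u u) : p.weight w = 0 := by
  classical
  rw [← weight_bypass hw hcyc, eq_nil_iff_nil.2 (isPath_iff_nil.1 p.bypass_isPath), weight_nil]

lemma weight_eq_weight {u v : V} (p q : G.Walk u v) : p.weight w = q.weight w := by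
  have := weight_eq_zero_of_closed hw hcyc (p.append q.reverse)
  rwa [weight_append, weight_reverse w hw, add_neg_eq_zero] at this

end Conservative

end Walk

theorem exists_potential {w : V → V → α} (hw : ∀ x y, w y x = -w x y)
    (hcyc : ∀ x (c : G.Walk x x), c.IsCycle → c.weight w = 0) :
    ∃ F : V → α, ∀ x y, G.Adj x y → F y = F x + w x y := by
  have reach (x : V) : G.Reachable (G.connectedComponentMk x).out x :=
    ConnectedComponent.exact (G.connectedComponentMk x).out_eq
  refine ⟨fun x => (reach x).some.weight w, fun x y h => ?_⟩
  have hbase : (G.connectedComponentMk x).out = (G.connectedComponentMk y).out := by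
    rw [ConnectedComponent.connectedComponentMk_eq_of_adj h]
  refine (Walk.weight_eq_weight hw hcyc _ (((reach x).some.concat h).copy hbase rfl)).trans ?_
  simp [Walk.concat]

end SimpleGraph

lemma Finset.sum_range_two_mul {M : Type*} [AddCommMonoid M] (g : ℕ → M) (r : ℕ) :
    ∑ n ∈ Finset.range (2 * r), g n = ∑ t ∈ Finset.range r, (g (2 * t) + g (2 * t + 1)) := by
  induction r with
  | zero => simp
  | succ r ih =>
    rw [show 2 * (r + 1) = 2 * r + 1 + 1 by ring, Finset.sum_range_succ, Finset.sum_range_succ,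
      ih, Finset.sum_range_succ, add_assoc]

open SimpleGraph Finset

def bipartiteWeight {α β γ : Type*} [AddGroup γ] (f : α → β → γ) : α ⊕ β → α ⊕ β → γ
  | .inl i, .inr j => f i j
  | .inr j, .inl i => -f i j
  | _, _ => 0

lemma bipartiteWeight_swap {α β γ : Type*} [AddGroup γ] (f : α → β → γ) (x y : α ⊕ β) :
    bipartiteWeight f y x = -bipartiteWeight f x y := by
  rcases x with i | j <;> rcases y with i' | j' <;> simp [bipartiteWeight]

/-- The circuit `i 0 — j 0 — i 1 — ⋯ — i (r - 1) — j (r - 1) — i 0` of the support graph. -/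
def IsSupportCircuit {d1 d2 : ℕ} (C : Fin d1 → Fin d2 → ℝ) (r : ℕ) (i : ℕ → Fin d1)
    (j : ℕ → Fin d2) : Prop :=
  2 ≤ r ∧ (∀ s < r, ∀ t < r, i s = i t → s = t) ∧ (∀ s < r, ∀ t < r, j s = j t → s = t) ∧
    ∀ t < r, 0 < C (i t) (j t) ∧ 0 < C (i ((t + 1) % r)) (j t)

lemma weight_bipartiteWeight_eq_sum {α β γ : Type*} [AddCommGroup γ] {G : SimpleGraph (α ⊕ β)}
    (f : α → β → γ) {x y : α ⊕ β} (p : G.Walk x y) {r : ℕ} (hr : p.length = 2 * r)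
    {i : ℕ → α} {j : ℕ → β} (hi : ∀ t ≤ r, p.getVert (2 * t) = .inl (i t))
    (hj : ∀ t < r, p.getVert (2 * t + 1) = .inr (j t)) :
    p.weight (bipartiteWeight f) = ∑ t ∈ range r, (f (i t) (j t) - f (i (t + 1)) (j t)) := by
  rw [p.weight_eq_sum_getVert, hr, Finset.sum_range_two_mul]
  refine Finset.sum_congr rfl fun t ht => ?_
  have ht : t < r := Finset.mem_range.1 ht
  rw [hi t ht.le, hj t ht, show 2 * t + 1 + 1 = 2 * (t + 1) by ring, hi (t + 1) ht]
  simp [bipartiteWeight, sub_eq_add_neg]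

namespace supportGraph

variable {d1 d2 : ℕ} {C : Fin d1 → Fin d2 → ℝ}

@[simp] lemma adj_inl_inr {i : Fin d1} {j : Fin d2} :
    (supportGraph C).Adj (.inl i) (.inr j) ↔ 0 < C i j := by
  simp [supportGraph]

@[simp] lemma adj_inr_inl {i : Fin d1} {j : Fin d2} :
    (supportGraph C).Adj (.inr j) (.inl i) ↔ 0 < C i j := by
  simp [supportGraph]

lemma isLeft_of_adj {x y : Fin d1 ⊕ Fin d2} (h : (supportGraph C).Adj x y) :
    y.isLeft = !x.isLeft := by
  obtain ⟨i, j, -, ⟨rfl, rfl⟩ | ⟨rfl, rfl⟩⟩ := h <;> rfl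

lemma isLeft_getVert {a : Fin d1} {y : Fin d1 ⊕ Fin d2} (p : (supportGraph C).Walk (.inl a) y)
    {n : ℕ} (hn : n ≤ p.length) : (p.getVert n).isLeft = decide (Even n) := by
  induction n with
  | zero => simp
  | succ n ih =>
    rw [isLeft_of_adj (p.adj_getVert_succ hn), ih (by omega)]
    simp only [Nat.even_add_one, decide_not]

lemma exists_isSupportCircuit_of_isCycle {γ : Type*} [AddCommGroup γ] (f : Fin d1 → Fin d2 → γ)
    {a : Fin d1} {c : (supportGraph C).Walk (.inl a) (.inl a)} (hc : c.IsCycle) :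
    ∃ r i j, IsSupportCircuit C r i j ∧
      c.weight (bipartiteWeight f) =
        ∑ t ∈ range r, (f (i t) (j t) - f (i ((t + 1) % r)) (j t)) := by
  have hpar (n : ℕ) (hn : n ≤ c.length) := isLeft_getVert c hn
  obtain ⟨r, hr⟩ : Even c.length := by simpa using hpar _ le_rfl
  rw [← two_mul] at hr
  have hr2 : 2 ≤ r := by have := hc.three_le_length; omega
  obtain ⟨b, -⟩ := Sum.isRight_iff.1 (by simpa using hpar 1 (by omega))
  set i : ℕ → Fin d1 := fun t => (c.getVert (2 * t)).elim id fun _ => a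
  set j : ℕ → Fin d2 := fun t => (c.getVert (2 * t + 1)).elim (fun _ => b) id
  have hi (t : ℕ) (ht : t ≤ r) : c.getVert (2 * t) = .inl (i t) := by
    obtain ⟨x, hx⟩ := Sum.isLeft_iff.1 (by simpa using hpar (2 * t) (by omega))
    simp [i, hx]
  have hj (t : ℕ) (ht : t < r) : c.getVert (2 * t + 1) = .inr (j t) := by
    obtain ⟨y, hy⟩ :=
      Sum.isRight_iff.1 (by simpa [Nat.even_add_one] using hpar (2 * t + 1) (by omega))
    simp [j, hy]
  have hwrap (t : ℕ) (ht : t < r) : i ((t + 1) % r) = i (t + 1) := by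
    rcases (Nat.succ_le_of_lt ht).lt_or_eq with hlt | rfl
    · rw [Nat.mod_eq_of_lt hlt]
    · have h0 := hi 0 (by omega)
      have hr' := hi (t + 1) le_rfl
      rw [← hr, c.getVert_length] at hr'
      rw [mul_zero, c.getVert_zero] at h0
      rw [Nat.mod_self]
      exact Sum.inl_injective (h0.symm.trans hr')
  have hinj (m n : ℕ) (hm : m < 2 * r) (hn : n < 2 * r) (h : c.getVert m = c.getVert n) :
      m = n :=
    hc.getVert_injOn' (by simp only [Set.mem_ofPred_eq]; omega)
      (by simp only [Set.mem_ofPred_eq]; omega) h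
  refine ⟨r, i, j, ⟨hr2, fun s hs t ht h => ?_, fun s hs t ht h => ?_, fun t ht => ⟨?_, ?_⟩⟩, ?_⟩
  · have := hinj (2 * s) (2 * t) (by omega) (by omega) (by rw [hi s hs.le, hi t ht.le, h])
    omega
  · have := hinj (2 * s + 1) (2 * t + 1) (by omega) (by omega) (by rw [hj s hs, hj t ht, h])
    omega
  · simpa [hi t ht.le, hj t ht] using c.adj_getVert_succ (i := 2 * t) (by omega)
  · have hadj := c.adj_getVert_succ (i := 2 * t + 1) (by omega)
    rw [show 2 * t + 1 + 1 = 2 * (t + 1) by ring, hi (t + 1) ht, hj t ht] at hadj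
    simpa [hwrap t ht] using hadj
  · rw [weight_bipartiteWeight_eq_sum f c hr hi hj]
    exact Finset.sum_congr rfl fun t ht => by rw [hwrap t (Finset.mem_range.1 ht)]

lemma weight_bipartiteWeight_eq_zero_of_isCycle {γ : Type*} [AddCommGroup γ]
    {f : Fin d1 → Fin d2 → γ}
    (hf : ∀ r i j, IsSupportCircuit C r i j →
      ∑ t ∈ range r, (f (i t) (j t) - f (i ((t + 1) % r)) (j t)) = 0)
    {x : Fin d1 ⊕ Fin d2} {c : (supportGraph C).Walk x x} (hc : c.IsCycle) :
    c.weight (bipartiteWeight f) = 0 := by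
  rcases x with a | b
  · obtain ⟨r, i, j, hcirc, hsum⟩ := exists_isSupportCircuit_of_isCycle f hc
    rw [hsum, hf r i j hcirc]
  · have hadj := c.adj_getVert_succ (i := 0) (by have := hc.three_le_length; omega)
    obtain ⟨a, ha⟩ := Sum.isLeft_iff.1 (by simpa using isLeft_of_adj hadj)
    have hmem : .inl a ∈ c.support := ha ▸ c.getVert_mem_support 1
    rw [← c.weight_rotate _ hmem]
    obtain ⟨r, i, j, hcirc, hsum⟩ := exists_isSupportCircuit_of_isCycle f (hc.rotate hmem)
    rw [hsum, hf r i j hcirc]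

end supportGraph

lemma pos_of_pos_of_eq_zero_iff {α : Type*} [Zero α] [PartialOrder α] {x y : α} (hy : 0 ≤ y)
    (hxy : x = 0 ↔ y = 0) (hx : 0 < x) : 0 < y :=
  hy.lt_of_ne fun h => hx.ne' (hxy.2 h.symm)

open Real in
lemma IsSupportCircuit.sum_log_sub_log_eq_zero {d1 d2 : ℕ} {C D : Fin d1 → Fin d2 → ℝ}
    (hD : ∀ i j, 0 ≤ D i j) (hsupp : ∀ i j, C i j = 0 ↔ D i j = 0)
    {r : ℕ} {i : ℕ → Fin d1} {j : ℕ → Fin d2} (h : IsSupportCircuit C r i j)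
    (hprod : ∏ t ∈ range r, (C (i t) (j t) * D (i ((t + 1) % r)) (j t))
      = ∏ t ∈ range r, (D (i t) (j t) * C (i ((t + 1) % r)) (j t))) :
    ∑ t ∈ range r, ((log (C (i t) (j t)) - log (D (i t) (j t)))
      - (log (C (i ((t + 1) % r)) (j t)) - log (D (i ((t + 1) % r)) (j t)))) = 0 := by
  obtain ⟨-, -, -, hpos⟩ := h
  have hDpos {i : Fin d1} {j : Fin d2} : 0 < C i j → 0 < D i j :=
    pos_of_pos_of_eq_zero_iff (hD i j) (hsupp i j)
  have key := congrArg log hprod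
  rw [log_prod fun t ht => ?lhs, log_prod fun t ht => ?rhs, ← sub_eq_zero,
    ← Finset.sum_sub_distrib] at key
  case lhs | rhs =>
    obtain ⟨h1, h2⟩ := hpos t (Finset.mem_range.1 ht)
    positivity [hDpos h1, hDpos h2]
  rw [← key]
  refine Finset.sum_congr rfl fun t ht => ?_
  obtain ⟨h1, h2⟩ := hpos t (Finset.mem_range.1 ht)
  rw [log_mul h1.ne' (hDpos h2).ne', log_mul (hDpos h1).ne' h2.ne']
  ring

open Real in
theorem circuit_conditions_sufficient_general (d1 d2 : ℕ)
    (C D : Fin d1 → Fin d2 → ℝ)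
    (hC : ∀ i j, 0 ≤ C i j) (hD : ∀ i j, 0 ≤ D i j)
    (hsupp : ∀ i j, C i j = 0 ↔ D i j = 0)
    (hcirc : ∀ (r : ℕ), 2 ≤ r → ∀ (i : ℕ → Fin d1) (j : ℕ → Fin d2),
      (∀ s < r, ∀ t < r, i s = i t → s = t) →
      (∀ s < r, ∀ t < r, j s = j t → s = t) →
      (∀ t < r, 0 < C (i t) (j t) ∧ 0 < C (i ((t + 1) % r)) (j t)) →
      ∏ t ∈ Finset.range r, (C (i t) (j t) * D (i ((t + 1) % r)) (j t))
        = ∏ t ∈ Finset.range r, (D (i t) (j t) * C (i ((t + 1) % r)) (j t))) :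
    ∃ (P : Fin d1 → Fin d2 → ℝ) (u : Fin d1 → ℝ) (v : Fin d2 → ℝ),
      (∀ i, 0 < u i) ∧ (∀ j, 0 < v j) ∧ (∀ i j, 0 ≤ P i j) ∧
      (∀ i j, C i j = P i j * v j) ∧ (∀ i j, D i j = P i j * u i) := by
  obtain ⟨F, hF⟩ := exists_potential (bipartiteWeight_swap fun i j => log (C i j) - log (D i j))
    fun _ _ hc => supportGraph.weight_bipartiteWeight_eq_zero_of_isCycle
      (fun r i j h => h.sum_log_sub_log_eq_zero hD hsupp
        (hcirc r h.1 i j h.2.1 h.2.2.1 h.2.2.2)) hc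
  refine ⟨fun i j => C i j / exp (F (.inr j)), fun i => exp (F (.inl i)),
    fun j => exp (F (.inr j)), fun _ => exp_pos _, fun _ => exp_pos _,
    fun i j => div_nonneg (hC i j) (exp_pos _).le,
    fun i j => (div_mul_cancel₀ _ (exp_pos _).ne').symm, fun i j => ?_⟩
  rcases (hC i j).eq_or_lt with hzero | hpos
  · simp [← hzero, (hsupp i j).1 hzero.symm]
  · have hDpos := pos_of_pos_of_eq_zero_iff (hD i j) (hsupp i j) hpos
    show D i j = C i j / exp (F (.inr j)) * exp (F (.inl i))
    rw [hF _ _ (supportGraph.adj_inl_inr.2 hpos), bipartiteWeight, exp_add, exp_sub,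
      exp_log hpos, exp_log hDpos]
    field_simp

/-- sufficiency of the circuit binomial conditions.  If `C`, `D` are
nonnegative conditional arrays with common support, normalized column sums (for `C`) and row
sums (for `D`), whose support graph is connected, and which satisfy every circuit binomial
equation of the support graph, then `C` and `D` admit the Lawrence-lifting parametrization
`C i j = P i j * v j`, `D i j = P i j * u i` with `u, v` positive and `P` nonnegative; hence
they are compatible conditionals. -/
theorem circuit_conditions_sufficient (d1 d2 : ℕ)
    (C D : Fin d1 → Fin d2 → ℝ)
    (hC : ∀ i j, 0 ≤ C i j) (hD : ∀ i j, 0 ≤ D i j)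
    (hsupp : ∀ i j, C i j = 0 ↔ D i j = 0)
    (hCsum : ∀ j, ∑ i, C i j = 1) (hDsum : ∀ i, ∑ j, D i j = 1)
    (hconn : (supportGraph C).Connected)
    (hcirc : ∀ (r : ℕ), 2 ≤ r → ∀ (i : ℕ → Fin d1) (j : ℕ → Fin d2),
      (∀ s < r, ∀ t < r, i s = i t → s = t) →
      (∀ s < r, ∀ t < r, j s = j t → s = t) →
      (∀ t < r, 0 < C (i t) (j t) ∧ 0 < C (i ((t + 1) % r)) (j t)) →
      ∏ t ∈ Finset.range r, (C (i t) (j t) * D (i ((t + 1) % r)) (j t))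
        = ∏ t ∈ Finset.range r, (D (i t) (j t) * C (i ((t + 1) % r)) (j t))) :
    ∃ (P : Fin d1 → Fin d2 → ℝ) (u : Fin d1 → ℝ) (v : Fin d2 → ℝ),
      (∀ i, 0 < u i) ∧ (∀ j, 0 < v j) ∧ (∀ i j, 0 ≤ P i j) ∧
      (∀ i j, C i j = P i j * v j) ∧ (∀ i j, D i j = P i j * u i) :=
  circuit_conditions_sufficient_general d1 d2 C D hC hD hsupp hcirc
end
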